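/- (Cotlar–Stein Lemma) Let (A_n)_{n≥1} be a sequence of bounded operators on a Hilbert space H such that A := sup_j Σ_{k=1}^∞ ‖A_j* A_k‖^{1/2} < ∞ and B := sup_j Σ_{k=1}^∞ ‖A_j A_k*‖^{1/2} < ∞. Then the sum Σ_{k=1}^∞ A_k converges in the strong operator topology to a bounded operator whose operator norm is at most √(AB). -/

import Mathlib

open scoped Topology
open ContinuousLinearMap

namespace CotlarSteinAux

variable {H : Type} [NormedAddCommGroup H] [InnerProductSpace ℂ H] [CompleteSpace H]

noncomputable def opChain (T : ℕ → H →L[ℂ] H) : List (ℕ × ℕ) → (H →L[ℂ] H)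
  | [] => 1
  | p :: l => (adjoint (T p.1) * T p.2) * opChain T l

noncomputable def b1 (T : ℕ → H →L[ℂ] H) : List (ℕ × ℕ) → ℝ
  | [] => 1
  | p :: l => ‖adjoint (T p.1) * T p.2‖ * b1 T l

noncomputable def cross (T : ℕ → H →L[ℂ] H) : ℕ → List (ℕ × ℕ) → ℝ
  | k, [] => ‖T k‖
  | k, q :: l => ‖T k * adjoint (T q.1)‖ * cross T q.2 l

noncomputable def b2 (T : ℕ → H →L[ℂ] H) : List (ℕ × ℕ) → ℝ
  | [] => 1
  | p :: l => ‖T p.1‖ * cross T p.2 l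

variable (T : ℕ → H →L[ℂ] H)

lemma b1_nonneg : ∀ l, 0 ≤ b1 T l
  | [] => zero_le_one
  | p :: l => mul_nonneg (norm_nonneg _) (b1_nonneg l)

lemma cross_nonneg : ∀ k l, 0 ≤ cross T k l
  | _, [] => norm_nonneg _
  | _, q :: l => mul_nonneg (norm_nonneg _) (cross_nonneg q.2 l)

lemma b2_nonneg : ∀ l, 0 ≤ b2 T l
  | [] => zero_le_one
  | p :: l => mul_nonneg (norm_nonneg _) (cross_nonneg T p.2 l)

lemma norm_opChain_le_b1 : ∀ l, ‖opChain T l‖ ≤ b1 T l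
  | [] => by simpa [opChain, b1, one_def] using norm_id_le
  | p :: l => by
      refine (norm_mul_le _ _).trans ?_
      exact mul_le_mul_of_nonneg_left (norm_opChain_le_b1 l) (norm_nonneg _)

lemma norm_mid_le_cross : ∀ k l, ‖T k * opChain T l‖ ≤ cross T k l
  | k, [] => by
      simp [opChain, cross]
  | k, q :: l => by
      have key : T k * opChain T (q :: l)
          = (T k * adjoint (T q.1)) * (T q.2 * opChain T l) := by
        show T k * ((adjoint (T q.1) * T q.2) * opChain T l) = _
        rw [← mul_assoc, ← mul_assoc, mul_assoc (T k * adjoint (T q.1))]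
      rw [key]
      refine (norm_mul_le _ _).trans ?_
      exact mul_le_mul_of_nonneg_left (norm_mid_le_cross q.2 l) (norm_nonneg _)

lemma norm_opChain_le_b2 (p : ℕ × ℕ) (l : List (ℕ × ℕ)) :
    ‖opChain T (p :: l)‖ ≤ b2 T (p :: l) := by
  have key : opChain T (p :: l) = adjoint (T p.1) * (T p.2 * opChain T l) := by
    show (adjoint (T p.1) * T p.2) * opChain T l = _
    rw [mul_assoc]
  rw [key]
  refine (norm_mul_le _ _).trans ?_
  have hadj : ‖(adjoint (T p.1) : H →L[ℂ] H)‖ = ‖T p.1‖ :=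
    LinearIsometryEquiv.norm_map (adjoint : (H →L[ℂ] H) ≃ₗᵢ⋆[ℂ] (H →L[ℂ] H)) (T p.1)
  rw [hadj]
  exact mul_le_mul_of_nonneg_left (norm_mid_le_cross T p.2 l) (norm_nonneg _)

lemma norm_opChain_le : ∀ l, ‖opChain T l‖ ≤ Real.sqrt (b1 T l) * Real.sqrt (b2 T l)
  | [] => by
      simpa [b1, b2, opChain, one_def] using norm_id_le
  | p :: l => by
      rw [← Real.sqrt_mul (b1_nonneg T _)]
      refine Real.le_sqrt_of_sq_le ?_
      rw [sq]
      exact mul_le_mul (norm_opChain_le_b1 T _) (norm_opChain_le_b2 T p l)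
        (norm_nonneg _) (b1_nonneg T _)

noncomputable section

def chainL {F : Finset ℕ} {n : ℕ} (v : Fin n → ↥(F ×ˢ F)) : List (ℕ × ℕ) :=
  List.ofFn (fun i => ((v i : ℕ × ℕ)))

lemma chainL_cons {F : Finset ℕ} {n : ℕ} (q : ↥(F ×ˢ F)) (v : Fin n → ↥(F ×ˢ F)) :
    chainL (Fin.cons q v) = (q : ℕ × ℕ) :: chainL v := by
  simp [chainL, List.ofFn_succ]

lemma sum_cons_decomp {F : Finset ℕ} {n : ℕ} {M : Type*} [AddCommMonoid M]
    (g : (Fin (n+1) → ↥(F ×ˢ F)) → M) :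
    ∑ v : Fin (n+1) → ↥(F ×ˢ F), g v
      = ∑ q : ↥(F ×ˢ F), ∑ w : Fin n → ↥(F ×ˢ F), g (Fin.cons q w) := by
  rw [← Equiv.sum_comp (Fin.consEquiv (fun _ => ↥(F ×ˢ F))) g, Fintype.sum_prod_type]
  rfl

lemma expand (F : Finset ℕ) :
    ∀ n : ℕ, (∑ p ∈ F ×ˢ F, adjoint (T p.1) * T p.2) ^ n
      = ∑ v : Fin n → ↥(F ×ˢ F), opChain T (chainL v)
  | 0 => by
      rw [pow_zero, Fintype.sum_unique]
      rfl
  | n + 1 => by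
      rw [pow_succ', expand F n, sum_cons_decomp, ← Finset.sum_coe_sort (F ×ˢ F),
        Finset.sum_mul]
      refine Finset.sum_congr rfl fun q _ => ?_
      rw [Finset.mul_sum]
      refine Finset.sum_congr rfl fun w _ => ?_
      rw [chainL_cons]
      rfl

end

section Bounds

variable {CA CB : ℝ} (hCA : 0 ≤ CA) (hCB : 0 ≤ CB)
  (hA' : ∀ j (G : Finset ℕ), ∑ k ∈ G, Real.sqrt ‖adjoint (T j) * T k‖ ≤ CA)
  (hB' : ∀ j (G : Finset ℕ), ∑ k ∈ G, Real.sqrt ‖T j * adjoint (T k)‖ ≤ CB)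
  (hT : ∀ m, ‖T m‖ ≤ Real.sqrt (CA * CB))

include hCA hCB hA' hB' hT

lemma sc_sum (F : Finset ℕ) :
    ∀ (n : ℕ) (k : ℕ),
      ∑ v : Fin n → ↥(F ×ˢ F),
          Real.sqrt (b1 T (chainL v)) * Real.sqrt (cross T k (chainL v))
        ≤ (CA * CB) ^ n * Real.sqrt (Real.sqrt (CA * CB))
  | 0, k => by
      rw [Fintype.sum_unique]
      have h1 : chainL (default : Fin 0 → ↥(F ×ˢ F)) = [] := by
        simp [chainL]
      rw [h1, pow_zero, one_mul]
      show Real.sqrt (b1 T []) * Real.sqrt (cross T k []) ≤ _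
      simp only [b1, cross, Real.sqrt_one, one_mul]
      exact Real.sqrt_le_sqrt (hT k)
  | n + 1, k => by
      rw [sum_cons_decomp]
      have step : ∀ q : ↥(F ×ˢ F),
          ∑ w : Fin n → ↥(F ×ˢ F),
            Real.sqrt (b1 T (chainL (Fin.cons q w))) *
              Real.sqrt (cross T k (chainL (Fin.cons q w)))
          = (Real.sqrt ‖adjoint (T (q : ℕ × ℕ).1) * T (q : ℕ × ℕ).2‖ *
              Real.sqrt ‖T k * adjoint (T (q : ℕ × ℕ).1)‖) *
            ∑ w : Fin n → ↥(F ×ˢ F),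
              Real.sqrt (b1 T (chainL w)) * Real.sqrt (cross T (q : ℕ × ℕ).2 (chainL w)) := by
        intro q
        rw [Finset.mul_sum]
        refine Finset.sum_congr rfl fun w _ => ?_
        rw [chainL_cons]
        show Real.sqrt (b1 T (((q : ℕ × ℕ)) :: chainL w)) *
            Real.sqrt (cross T k (((q : ℕ × ℕ)) :: chainL w)) = _
        simp only [b1, cross]
        rw [Real.sqrt_mul (norm_nonneg _), Real.sqrt_mul (norm_nonneg _)]
        ring
      calc ∑ q : ↥(F ×ˢ F), ∑ w : Fin n → ↥(F ×ˢ F),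
              Real.sqrt (b1 T (chainL (Fin.cons q w))) *
                Real.sqrt (cross T k (chainL (Fin.cons q w)))
          ≤ ∑ q : ↥(F ×ˢ F),
              (Real.sqrt ‖adjoint (T (q : ℕ × ℕ).1) * T (q : ℕ × ℕ).2‖ *
                Real.sqrt ‖T k * adjoint (T (q : ℕ × ℕ).1)‖) *
              ((CA * CB) ^ n * Real.sqrt (Real.sqrt (CA * CB))) := by
            refine Finset.sum_le_sum fun q _ => ?_
            rw [step q]
            exact mul_le_mul_of_nonneg_left
              (sc_sum F n (q : ℕ × ℕ).2)
              (mul_nonneg (Real.sqrt_nonneg _) (Real.sqrt_nonneg _))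
        _ = (∑ q : ↥(F ×ˢ F),
              Real.sqrt ‖adjoint (T (q : ℕ × ℕ).1) * T (q : ℕ × ℕ).2‖ *
                Real.sqrt ‖T k * adjoint (T (q : ℕ × ℕ).1)‖) *
              ((CA * CB) ^ n * Real.sqrt (Real.sqrt (CA * CB))) := by
            rw [Finset.sum_mul]
        _ ≤ (CA * CB) * ((CA * CB) ^ n * Real.sqrt (Real.sqrt (CA * CB))) := by
            refine mul_le_mul_of_nonneg_right ?_
              (mul_nonneg (by positivity) (Real.sqrt_nonneg _))
            have hsum : ∑ q : ↥(F ×ˢ F),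
                Real.sqrt ‖adjoint (T (q : ℕ × ℕ).1) * T (q : ℕ × ℕ).2‖ *
                  Real.sqrt ‖T k * adjoint (T (q : ℕ × ℕ).1)‖
                = ∑ p ∈ F ×ˢ F,
                    Real.sqrt ‖adjoint (T p.1) * T p.2‖ *
                      Real.sqrt ‖T k * adjoint (T p.1)‖ :=
              Finset.sum_coe_sort (F ×ˢ F)
                (fun p => Real.sqrt ‖adjoint (T p.1) * T p.2‖ *
                  Real.sqrt ‖T k * adjoint (T p.1)‖)
            rw [hsum, Finset.sum_product]
            calc ∑ j ∈ F, ∑ k' ∈ F,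
                  Real.sqrt ‖adjoint (T j) * T k'‖ * Real.sqrt ‖T k * adjoint (T j)‖
                ≤ ∑ j ∈ F, CA * Real.sqrt ‖T k * adjoint (T j)‖ := by
                  refine Finset.sum_le_sum fun j _ => ?_
                  rw [← Finset.sum_mul]
                  exact mul_le_mul_of_nonneg_right (hA' j F) (Real.sqrt_nonneg _)
              _ = CA * ∑ j ∈ F, Real.sqrt ‖T k * adjoint (T j)‖ := by
                  rw [Finset.mul_sum]
              _ ≤ CA * CB := mul_le_mul_of_nonneg_left (hB' k F) hCA
        _ = (CA * CB) ^ (n + 1) * Real.sqrt (Real.sqrt (CA * CB)) := by ring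

lemma total_sum (F : Finset ℕ) (n : ℕ) :
    ∑ v : Fin (n + 1) → ↥(F ×ˢ F),
        Real.sqrt (b1 T (chainL v)) * Real.sqrt (b2 T (chainL v))
      ≤ (F.card : ℝ) * CA * (CA * CB) ^ n * Real.sqrt (CA * CB) := by
  rw [sum_cons_decomp]
  have hB0 : ∀ m, Real.sqrt ‖T m‖ ≤ Real.sqrt (Real.sqrt (CA * CB)) :=
    fun m => Real.sqrt_le_sqrt (hT m)
  have step : ∀ q : ↥(F ×ˢ F),
      ∑ w : Fin n → ↥(F ×ˢ F),
        Real.sqrt (b1 T (chainL (Fin.cons q w))) *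
          Real.sqrt (b2 T (chainL (Fin.cons q w)))
      = (Real.sqrt ‖T (q : ℕ × ℕ).1‖ *
          Real.sqrt ‖adjoint (T (q : ℕ × ℕ).1) * T (q : ℕ × ℕ).2‖) *
        ∑ w : Fin n → ↥(F ×ˢ F),
          Real.sqrt (b1 T (chainL w)) * Real.sqrt (cross T (q : ℕ × ℕ).2 (chainL w)) := by
    intro q
    rw [Finset.mul_sum]
    refine Finset.sum_congr rfl fun w _ => ?_
    rw [chainL_cons]
    show Real.sqrt (b1 T (((q : ℕ × ℕ)) :: chainL w)) *
        Real.sqrt (b2 T (((q : ℕ × ℕ)) :: chainL w)) = _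
    simp only [b1, b2]
    rw [Real.sqrt_mul (norm_nonneg _), Real.sqrt_mul (norm_nonneg _)]
    ring
  calc ∑ q : ↥(F ×ˢ F), ∑ w : Fin n → ↥(F ×ˢ F),
          Real.sqrt (b1 T (chainL (Fin.cons q w))) *
            Real.sqrt (b2 T (chainL (Fin.cons q w)))
      ≤ ∑ q : ↥(F ×ˢ F),
          (Real.sqrt (Real.sqrt (CA * CB)) *
            Real.sqrt ‖adjoint (T (q : ℕ × ℕ).1) * T (q : ℕ × ℕ).2‖) *
          ((CA * CB) ^ n * Real.sqrt (Real.sqrt (CA * CB))) := by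
        refine Finset.sum_le_sum fun q _ => ?_
        rw [step q]
        refine mul_le_mul
          (mul_le_mul_of_nonneg_right (hB0 _) (Real.sqrt_nonneg _))
          (sc_sum T hCA hCB hA' hB' hT F n (q : ℕ × ℕ).2)
          (Finset.sum_nonneg fun w _ =>
            mul_nonneg (Real.sqrt_nonneg _) (Real.sqrt_nonneg _))
          (mul_nonneg (Real.sqrt_nonneg _) (Real.sqrt_nonneg _))
    _ = (Real.sqrt (Real.sqrt (CA * CB)) * Real.sqrt (Real.sqrt (CA * CB)) *
          (CA * CB) ^ n) *
          ∑ q : ↥(F ×ˢ F), Real.sqrt ‖adjoint (T (q : ℕ × ℕ).1) * T (q : ℕ × ℕ).2‖ := by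
        rw [Finset.mul_sum]
        refine Finset.sum_congr rfl fun q _ => ?_
        ring
    _ ≤ (Real.sqrt (Real.sqrt (CA * CB)) * Real.sqrt (Real.sqrt (CA * CB)) *
          (CA * CB) ^ n) * ((F.card : ℝ) * CA) := by
        refine mul_le_mul_of_nonneg_left ?_ (by positivity)
        have hsum : ∑ q : ↥(F ×ˢ F),
            Real.sqrt ‖adjoint (T (q : ℕ × ℕ).1) * T (q : ℕ × ℕ).2‖
            = ∑ p ∈ F ×ˢ F, Real.sqrt ‖adjoint (T p.1) * T p.2‖ :=
          Finset.sum_coe_sort (F ×ˢ F) (fun p => Real.sqrt ‖adjoint (T p.1) * T p.2‖)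
        rw [hsum, Finset.sum_product]
        calc ∑ j ∈ F, ∑ k' ∈ F, Real.sqrt ‖adjoint (T j) * T k'‖
            ≤ ∑ _j ∈ F, CA := Finset.sum_le_sum fun j _ => hA' j F
          _ = (F.card : ℝ) * CA := by
              rw [Finset.sum_const, nsmul_eq_mul]
    _ = (F.card : ℝ) * CA * (CA * CB) ^ n * Real.sqrt (CA * CB) := by
        rw [Real.mul_self_sqrt (Real.sqrt_nonneg _)]
        ring

lemma pow_norm_le (F : Finset ℕ) (n : ℕ) :
    ‖(∑ p ∈ F ×ˢ F, adjoint (T p.1) * T p.2) ^ (n + 1)‖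
      ≤ (F.card : ℝ) * CA * (CA * CB) ^ n * Real.sqrt (CA * CB) := by
  rw [expand]
  refine (norm_sum_le _ _).trans ?_
  refine le_trans (Finset.sum_le_sum fun v _ => norm_opChain_le T (chainL v)) ?_
  exact total_sum T hCA hCB hA' hB' hT F n

end Bounds

section FiniteCS

variable {CA CB : ℝ} (hCA : 0 ≤ CA) (hCB : 0 ≤ CB)
  (hA' : ∀ j (G : Finset ℕ), ∑ k ∈ G, Real.sqrt ‖adjoint (T j) * T k‖ ≤ CA)
  (hB' : ∀ j (G : Finset ℕ), ∑ k ∈ G, Real.sqrt ‖T j * adjoint (T k)‖ ≤ CB)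
  (hT : ∀ m, ‖T m‖ ≤ Real.sqrt (CA * CB))

include hCA hCB hA' hB' hT

lemma finite_CS (F : Finset ℕ) : ‖∑ k ∈ F, T k‖ ≤ Real.sqrt (CA * CB) := by
  rcases F.eq_empty_or_nonempty with hF | hF
  · subst hF
    simp [Real.sqrt_nonneg]
  by_cases hr0 : CA * CB = 0
  · have hz : ∀ m, T m = 0 := fun m => by
      have := hT m
      rw [hr0, Real.sqrt_zero] at this
      exact norm_le_zero_iff.mp this
    have : ∑ k ∈ F, T k = 0 := Finset.sum_eq_zero fun k _ => hz k
    rw [this]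
    simp [Real.sqrt_nonneg]
  have hprod : 0 < CA * CB := lt_of_le_of_ne (mul_nonneg hCA hCB) (Ne.symm hr0)
  have hCApos : 0 < CA := by
    rcases hCA.lt_or_eq with h | h
    · exact h
    · exfalso; rw [← h] at hprod; simp at hprod
  set S : H →L[ℂ] H := ∑ k ∈ F, T k with hS
  set r : ℝ := Real.sqrt (CA * CB) with hrdef
  have hrpos : 0 < r := Real.sqrt_pos.mpr hprod
  set x : H →L[ℂ] H := adjoint S * S with hx
  have hx_eq : x = ∑ p ∈ F ×ˢ F, adjoint (T p.1) * T p.2 := by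
    have hadj : adjoint S = ∑ k ∈ F, adjoint (T k) := by
      rw [← star_eq_adjoint, hS, star_sum]
      exact Finset.sum_congr rfl fun k _ => star_eq_adjoint (T k)
    rw [hx, hadj, Finset.sum_mul_sum, ← Finset.sum_product']
  have hsa : IsSelfAdjoint x := by
    rw [IsSelfAdjoint, hx, star_mul, star_eq_adjoint, star_eq_adjoint, adjoint_adjoint]
  have hxnorm : ‖x‖ = ‖S‖ * ‖S‖ := by
    rw [hx, mul_def]
    exact norm_adjoint_comp_self S
  -- growth bound
  have growth : ∀ m : ℕ, (‖S‖ * ‖S‖) ^ (2 ^ m)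
      ≤ (F.card : ℝ) * CA * (CA * CB) ^ (2 ^ m - 1) * r := by
    intro m
    have h1 : (‖S‖ * ‖S‖) ^ (2 ^ m) = ‖x ^ 2 ^ m‖ := by
      rw [← hxnorm]
      have := hsa.nnnorm_pow_two_pow m
      have h2 : ‖x ^ 2 ^ m‖ = (‖x ^ 2 ^ m‖₊ : ℝ) := rfl
      rw [h2, this]
      push_cast
      rfl
    rw [h1]
    have hsplit : 2 ^ m = (2 ^ m - 1) + 1 := (Nat.sub_add_cancel Nat.one_le_two_pow).symm
    rw [hx_eq, hsplit]
    exact pow_norm_le T hCA hCB hA' hB' hT F (2 ^ m - 1)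
  -- conclude by contradiction
  by_contra hcon
  push_neg at hcon
  have hKr : 1 < ‖S‖ / r := (one_lt_div hrpos).mpr hcon
  set D : ℝ := (F.card : ℝ) * CA * r / (CA * CB) with hD
  obtain ⟨n₀, hn₀⟩ := pow_unbounded_of_one_lt D hKr
  have hbound : ∀ m : ℕ, (‖S‖ / r) ^ (2 * 2 ^ m) ≤ D := by
    intro m
    have hr2 : r ^ 2 = CA * CB := Real.sq_sqrt hprod.le
    have hpow : r ^ (2 * 2 ^ m) = (CA * CB) ^ (2 ^ m) := by
      rw [pow_mul, hr2]
    have hRHS : (F.card : ℝ) * CA * (CA * CB) ^ (2 ^ m - 1) * r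
        = D * r ^ (2 * 2 ^ m) := by
      rw [hpow, hD]
      have hsplit : 2 ^ m = (2 ^ m - 1) + 1 := (Nat.sub_add_cancel Nat.one_le_two_pow).symm
      rw [hsplit, pow_succ]
      simp only [Nat.add_sub_cancel]
      rw [div_mul_eq_mul_div, eq_div_iff hr0]
      ring
    have hKK : ‖S‖ ^ (2 * 2 ^ m) ≤ D * r ^ (2 * 2 ^ m) := by
      have := growth m
      rw [hRHS] at this
      calc ‖S‖ ^ (2 * 2 ^ m) = (‖S‖ * ‖S‖) ^ (2 ^ m) := by
            rw [← sq, ← pow_mul]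
        _ ≤ D * r ^ (2 * 2 ^ m) := this
    rw [div_pow, div_le_iff₀ (pow_pos hrpos _)]
    exact hKK
  have hmono : (‖S‖ / r) ^ n₀ ≤ (‖S‖ / r) ^ (2 * 2 ^ n₀) := by
    refine pow_le_pow_right₀ hKr.le ?_
    calc n₀ ≤ 2 ^ n₀ := (Nat.lt_two_pow_self (n := n₀)).le
      _ ≤ 2 * 2 ^ n₀ := by omega
  exact absurd (hn₀.trans_le (hmono.trans (hbound n₀))) (lt_irrefl _)

end FiniteCS

section Conv

variable {CA CB : ℝ} (hCA : 0 ≤ CA) (hCB : 0 ≤ CB)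
  (hA' : ∀ j (G : Finset ℕ), ∑ k ∈ G, Real.sqrt ‖adjoint (T j) * T k‖ ≤ CA)
  (hB' : ∀ j (G : Finset ℕ), ∑ k ∈ G, Real.sqrt ‖T j * adjoint (T k)‖ ≤ CB)
  (hT : ∀ m, ‖T m‖ ≤ Real.sqrt (CA * CB))
  (hBsum' : ∀ j, Summable fun k => Real.sqrt ‖T j * adjoint (T k)‖)

include hCA hCB hA' hB' hT hBsum'

theorem exists_limit : ∃ S : H →L[ℂ] H, ‖S‖ ≤ Real.sqrt (CA * CB) ∧
    ∀ ξ : H, Filter.Tendsto (fun N => ∑ k ∈ Finset.range N, T k ξ)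
      Filter.atTop (𝓝 (S ξ)) := by
  set r : ℝ := Real.sqrt (CA * CB) with hrdef
  have hr0 : 0 ≤ r := Real.sqrt_nonneg _
  have key : ∀ G : Finset ℕ, ‖∑ k ∈ G, T k‖ ≤ r := finite_CS T hCA hCB hA' hB' hT
  have hdiff : ∀ M N : ℕ,
      ‖(∑ k ∈ Finset.range N, T k) - ∑ k ∈ Finset.range M, T k‖ ≤ r := by
    intro M N
    rcases le_total M N with h | h
    · rw [← Finset.sum_sdiff_eq_sub (Finset.range_subset_range.mpr h)]
      exact key _
    · rw [← norm_neg, neg_sub, ← Finset.sum_sdiff_eq_sub (Finset.range_subset_range.mpr h)]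
      exact key _
  set Dset : Set H := {ξ | CauchySeq fun N => ∑ k ∈ Finset.range N, T k ξ} with hDdef
  have hzero' : ∀ ξ : H, (∀ k, T k ξ = 0) → ξ ∈ Dset := by
    intro ξ hξ
    have : (fun N => ∑ k ∈ Finset.range N, T k ξ) = fun _ => (0 : H) := by
      funext N
      exact Finset.sum_eq_zero fun k _ => hξ k
    show CauchySeq _
    rw [this]
    exact cauchySeq_const 0
  have hadd : ∀ ξ η, ξ ∈ Dset → η ∈ Dset → ξ + η ∈ Dset := by
    intro ξ η hξ hη
    have heq : (fun N => ∑ k ∈ Finset.range N, T k (ξ + η))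
        = fun N => (∑ k ∈ Finset.range N, T k ξ) + ∑ k ∈ Finset.range N, T k η := by
      funext N
      rw [← Finset.sum_add_distrib]
      exact Finset.sum_congr rfl fun k _ => map_add _ _ _
    show CauchySeq _
    rw [heq]
    exact CauchySeq.add hξ hη
  have hsmul : ∀ (c : ℂ) (ξ), ξ ∈ Dset → c • ξ ∈ Dset := by
    intro c ξ hξ
    have heq : (fun N => ∑ k ∈ Finset.range N, T k (c • ξ))
        = (fun x : H => c • x) ∘ fun N => ∑ k ∈ Finset.range N, T k ξ := by
      funext N
      simp only [Function.comp_apply, Finset.smul_sum]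
      exact Finset.sum_congr rfl fun k _ => map_smul _ _ _
    show CauchySeq _
    rw [heq]
    exact (uniformContinuous_const_smul c).comp_cauchySeq hξ
  have hrange : ∀ (m : ℕ) (η : H), adjoint (T m) η ∈ Dset := by
    intro m η
    have hsum1 : Summable fun k => ‖T k * adjoint (T m)‖ := by
      have h1 : ∀ k, ‖T k * adjoint (T m)‖ = ‖T m * adjoint (T k)‖ := by
        intro k
        calc ‖T k * adjoint (T m)‖
            = ‖adjoint (T k * adjoint (T m))‖ :=
              (LinearIsometryEquiv.norm_map
                (adjoint : (H →L[ℂ] H) ≃ₗᵢ⋆[ℂ] (H →L[ℂ] H)) _).symm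
          _ = ‖T m * adjoint (T k)‖ := by
              rw [mul_def, adjoint_comp, adjoint_adjoint, ← mul_def]
      have h2 : Summable fun k => CB * Real.sqrt ‖T m * adjoint (T k)‖ :=
        (hBsum' m).mul_left CB
      have h3 : Summable fun k => ‖T m * adjoint (T k)‖ := by
        refine h2.of_nonneg_of_le (fun k => norm_nonneg _) fun k => ?_
        have hk : Real.sqrt ‖T m * adjoint (T k)‖ ≤ CB := by
          have := hB' m {k}
          simpa using this
        calc ‖T m * adjoint (T k)‖
            = Real.sqrt ‖T m * adjoint (T k)‖ * Real.sqrt ‖T m * adjoint (T k)‖ :=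
              (Real.mul_self_sqrt (norm_nonneg _)).symm
          _ ≤ CB * Real.sqrt ‖T m * adjoint (T k)‖ :=
              mul_le_mul_of_nonneg_right hk (Real.sqrt_nonneg _)
      simpa only [h1] using h3
    have hsum2 : Summable fun k => T k (adjoint (T m) η) := by
      refine Summable.of_norm ?_
      refine (hsum1.mul_right ‖η‖).of_nonneg_of_le (fun k => norm_nonneg _) fun k => ?_
      calc ‖T k (adjoint (T m) η)‖ = ‖(T k * adjoint (T m)) η‖ := rfl
        _ ≤ ‖T k * adjoint (T m)‖ * ‖η‖ := le_opNorm _ _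
    exact (hsum2.hasSum.tendsto_sum_nat).cauchySeq
  -- the submodule of good vectors
  set Dsub : Submodule ℂ H :=
    { carrier := Dset
      add_mem' := fun {a b} ha hb => hadd a b ha hb
      zero_mem' := hzero' 0 (fun k => map_zero _)
      smul_mem' := fun c x hx => hsmul c x hx } with hDsub
  set V : Submodule ℂ H := ⨆ m : ℕ, LinearMap.range (adjoint (T m) : H →ₗ[ℂ] H) with hV
  have hVD : V ≤ Dsub := by
    refine iSup_le fun m => ?_
    rintro ξ ⟨η, rfl⟩
    exact hrange m η
  have hVperp : ∀ ξ ∈ Vᗮ, ξ ∈ Dset := by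
    intro ξ hξ
    refine hzero' ξ fun k => ?_
    have hmem : adjoint (T k) (T k ξ) ∈ V := by
      have : adjoint (T k) (T k ξ) ∈ LinearMap.range (adjoint (T k) : H →ₗ[ℂ] H) :=
        LinearMap.mem_range_self _ _
      exact (le_iSup (fun m : ℕ => LinearMap.range (adjoint (T m) : H →ₗ[ℂ] H)) k) this
    have h1 : (inner ℂ (adjoint (T k) (T k ξ)) ξ : ℂ) = 0 :=
      (Submodule.mem_orthogonal V ξ).mp hξ _ hmem
    rw [adjoint_inner_left] at h1
    exact inner_self_eq_zero.mp h1
  have hdense : ∀ (ξ : H), ∀ ε > (0 : ℝ), ∃ ξ' ∈ Dset, ‖ξ - ξ'‖ < ε := by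
    intro ξ ε hε
    set K := V.topologicalClosure with hK
    haveI : CompleteSpace K := (V.isClosed_topologicalClosure).completeSpace_coe
    obtain ⟨v, hv, w, hw, rfl⟩ := K.exists_add_mem_mem_orthogonal ξ
    have hv' : v ∈ closure (V : Set H) := hv
    rw [Metric.mem_closure_iff] at hv'
    obtain ⟨v', hv'V, hdist⟩ := hv' ε hε
    have hwD : w ∈ Dset := hVperp w (Submodule.orthogonal_le V.le_topologicalClosure hw)
    refine ⟨v' + w, hadd v' w (hVD hv'V) hwD, ?_⟩
    have : v + w - (v' + w) = v - v' := by abel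
    rw [this, ← dist_eq_norm]
    exact hdist
  have hcauchy : ∀ ξ : H, CauchySeq fun N => ∑ k ∈ Finset.range N, T k ξ := by
    intro ξ
    rw [Metric.cauchySeq_iff']
    intro ε hε
    obtain ⟨ξ', hξ'D, hclose⟩ := hdense ξ (ε / 3 / (r + 1)) (by positivity)
    have hc' : CauchySeq fun N => ∑ k ∈ Finset.range N, T k ξ' := hξ'D
    rw [Metric.cauchySeq_iff'] at hc'
    obtain ⟨N, hN⟩ := hc' (ε / 3) (by positivity)
    refine ⟨N, fun n hn => ?_⟩
    have hop : ∀ M M' : ℕ, ∀ ζ : H,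
        (∑ k ∈ Finset.range M, T k ζ) - ∑ k ∈ Finset.range M', T k ζ
          = ((∑ k ∈ Finset.range M, T k) - ∑ k ∈ Finset.range M', T k) ζ := by
      intro M M' ζ
      rw [ContinuousLinearMap.sub_apply, ContinuousLinearMap.sum_apply,
        ContinuousLinearMap.sum_apply]
    rw [dist_eq_norm]
    have hdec : (∑ k ∈ Finset.range n, T k ξ) - ∑ k ∈ Finset.range N, T k ξ
        = ((∑ k ∈ Finset.range n, T k) - ∑ k ∈ Finset.range N, T k) (ξ - ξ')
          + ((∑ k ∈ Finset.range n, T k ξ') - ∑ k ∈ Finset.range N, T k ξ') := by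
      rw [hop, hop, map_sub]
      abel
    rw [hdec]
    have h1 : ‖((∑ k ∈ Finset.range n, T k) - ∑ k ∈ Finset.range N, T k) (ξ - ξ')‖
        ≤ ε / 3 := by
      refine (le_opNorm _ _).trans ?_
      have := mul_le_mul (hdiff N n) hclose.le (norm_nonneg _) hr0
      refine this.trans ?_
      have h9 : r * (ε / 3 / (r + 1)) = ε / 3 * (r / (r + 1)) := by ring
      rw [h9]
      have h10 : r / (r + 1) ≤ 1 := div_le_one_of_le₀ (by linarith) (by positivity)
      exact mul_le_of_le_one_right (by positivity) h10
    calc ‖_ + _‖ ≤ _ + _ := norm_add_le _ _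
      _ < ε / 3 + ε / 3 := by
          have h2 := hN n hn
          rw [dist_eq_norm] at h2
          exact add_lt_add_of_le_of_lt h1 h2
      _ ≤ ε := by linarith
  choose Sf hSf using fun ξ => cauchySeq_tendsto_of_complete (hcauchy ξ)
  have hSadd : ∀ ξ η : H, Sf (ξ + η) = Sf ξ + Sf η := by
    intro ξ η
    refine tendsto_nhds_unique (hSf (ξ + η)) ?_
    have heq : (fun N => ∑ k ∈ Finset.range N, T k (ξ + η))
        = fun N => (∑ k ∈ Finset.range N, T k ξ) + ∑ k ∈ Finset.range N, T k η := by
      funext N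
      rw [← Finset.sum_add_distrib]
      exact Finset.sum_congr rfl fun k _ => map_add _ _ _
    rw [heq]
    exact (hSf ξ).add (hSf η)
  have hSsmul : ∀ (c : ℂ) (ξ : H), Sf (c • ξ) = c • Sf ξ := by
    intro c ξ
    refine tendsto_nhds_unique (hSf (c • ξ)) ?_
    have heq : (fun N => ∑ k ∈ Finset.range N, T k (c • ξ))
        = fun N => c • ∑ k ∈ Finset.range N, T k ξ := by
      funext N
      rw [Finset.smul_sum]
      exact Finset.sum_congr rfl fun k _ => map_smul _ _ _
    rw [heq]
    exact (hSf ξ).const_smul c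
  have hSbound : ∀ ξ : H, ‖Sf ξ‖ ≤ r * ‖ξ‖ := by
    intro ξ
    refine le_of_tendsto (hSf ξ).norm (Filter.Eventually.of_forall fun N => ?_)
    calc ‖∑ k ∈ Finset.range N, T k ξ‖
        = ‖(∑ k ∈ Finset.range N, T k) ξ‖ := by
          rw [ContinuousLinearMap.sum_apply]
      _ ≤ ‖∑ k ∈ Finset.range N, T k‖ * ‖ξ‖ := le_opNorm _ _
      _ ≤ r * ‖ξ‖ := mul_le_mul_of_nonneg_right (key _) (norm_nonneg _)
  set Slin : H →ₗ[ℂ] H :=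
    { toFun := Sf
      map_add' := hSadd
      map_smul' := hSsmul } with hSlin
  refine ⟨Slin.mkContinuous r hSbound, LinearMap.mkContinuous_norm_le _ hr0 _, fun ξ => ?_⟩
  exact hSf ξ

end Conv

end CotlarSteinAux

/-- **Cotlar–Stein lemma.** -/
theorem stmt5 {H : Type} [NormedAddCommGroup H] [InnerProductSpace ℂ H] [CompleteSpace H]
    (T : ℕ → H →L[ℂ] H) (CA CB : ℝ)
    (hAsum : ∀ j, Summable fun k => ‖ContinuousLinearMap.adjoint (T j) * T k‖ ^ (1 / 2 : ℝ))
    (hA : ∀ j, (∑' k, ‖ContinuousLinearMap.adjoint (T j) * T k‖ ^ (1 / 2 : ℝ)) ≤ CA)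
    (hBsum : ∀ j, Summable fun k => ‖T j * ContinuousLinearMap.adjoint (T k)‖ ^ (1 / 2 : ℝ))
    (hB : ∀ j, (∑' k, ‖T j * ContinuousLinearMap.adjoint (T k)‖ ^ (1 / 2 : ℝ)) ≤ CB) :
    ∃ S : H →L[ℂ] H, ‖S‖ ≤ Real.sqrt (CA * CB) ∧
      ∀ ξ : H, Filter.Tendsto (fun N => ∑ k ∈ Finset.range N, T k ξ)
        Filter.atTop (𝓝 (S ξ)) := by
  open ContinuousLinearMap in
  have hA' : ∀ j (G : Finset ℕ), ∑ k ∈ G, Real.sqrt ‖adjoint (T j) * T k‖ ≤ CA := by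
    intro j G
    calc ∑ k ∈ G, Real.sqrt ‖adjoint (T j) * T k‖
        = ∑ k ∈ G, ‖adjoint (T j) * T k‖ ^ (1 / 2 : ℝ) :=
          Finset.sum_congr rfl fun k _ => Real.sqrt_eq_rpow _
      _ ≤ ∑' k, ‖adjoint (T j) * T k‖ ^ (1 / 2 : ℝ) :=
          (hAsum j).sum_le_tsum G (fun k _ => Real.rpow_nonneg (norm_nonneg _) _)
      _ ≤ CA := hA j
  open ContinuousLinearMap in
  have hB' : ∀ j (G : Finset ℕ), ∑ k ∈ G, Real.sqrt ‖T j * adjoint (T k)‖ ≤ CB := by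
    intro j G
    calc ∑ k ∈ G, Real.sqrt ‖T j * adjoint (T k)‖
        = ∑ k ∈ G, ‖T j * adjoint (T k)‖ ^ (1 / 2 : ℝ) :=
          Finset.sum_congr rfl fun k _ => Real.sqrt_eq_rpow _
      _ ≤ ∑' k, ‖T j * adjoint (T k)‖ ^ (1 / 2 : ℝ) :=
          (hBsum j).sum_le_tsum G (fun k _ => Real.rpow_nonneg (norm_nonneg _) _)
      _ ≤ CB := hB j
  have hCA : 0 ≤ CA :=
    le_trans (tsum_nonneg fun k => Real.rpow_nonneg (norm_nonneg _) _) (hA 0)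
  have hCB : 0 ≤ CB :=
    le_trans (tsum_nonneg fun k => Real.rpow_nonneg (norm_nonneg _) _) (hB 0)
  open ContinuousLinearMap in
  have hT : ∀ m, ‖T m‖ ≤ Real.sqrt (CA * CB) := by
    intro m
    have hTA : ‖T m‖ ≤ CA := by
      have h1 := hA' m {m}
      rw [Finset.sum_singleton] at h1
      have h2 : ‖adjoint (T m) * T m‖ = ‖T m‖ * ‖T m‖ := by
        rw [mul_def]; exact norm_adjoint_comp_self (T m)
      rwa [h2, Real.sqrt_mul_self (norm_nonneg _)] at h1
    have hTB : ‖T m‖ ≤ CB := by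
      have h1 := hB' m {m}
      rw [Finset.sum_singleton] at h1
      have h2 : ‖T m * adjoint (T m)‖ = ‖T m‖ * ‖T m‖ := by
        have h3 := norm_adjoint_comp_self (adjoint (T m))
        rw [adjoint_adjoint] at h3
        rw [mul_def, h3]
        rw [LinearIsometryEquiv.norm_map
          (adjoint : (H →L[ℂ] H) ≃ₗᵢ⋆[ℂ] (H →L[ℂ] H)) (T m)]
      rwa [h2, Real.sqrt_mul_self (norm_nonneg _)] at h1
    calc ‖T m‖ = Real.sqrt (‖T m‖ * ‖T m‖) := (Real.sqrt_mul_self (norm_nonneg _)).symm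
      _ ≤ Real.sqrt (CA * CB) :=
          Real.sqrt_le_sqrt (mul_le_mul hTA hTB (norm_nonneg _) hCA)
  open ContinuousLinearMap in
  have hBsum' : ∀ j, Summable fun k => Real.sqrt ‖T j * adjoint (T k)‖ := by
    intro j
    have heq : (fun k => Real.sqrt ‖T j * adjoint (T k)‖)
        = fun k => ‖T j * adjoint (T k)‖ ^ (1 / 2 : ℝ) :=
      funext fun k => Real.sqrt_eq_rpow _
    rw [heq]
    exact hBsum j
  exact CotlarSteinAux.exists_limit T hCA hCB hA' hB' hT hBsum'
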